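/- Let k be a field of characteristic 2, f, h ∈ k[X] with h ≠ 0, let H be the radical of h, and suppose f = H·Q where Q ∈ k[X] is coprime to H. Then the affine curve Y² + h(X)Y = f(X) is smooth (has no singular points over the algebraic closure) if and only if Res_X(H, Q·H') ≠ 0. -/

import Mathlib

open Polynomial

/-- The Sylvester matrix of two polynomials `α` and `β`, of size
`β.natDegree + α.natDegree`. -/
noncomputable def sylvesterMatrix {R : Type*} [CommRing R] (α β : R[X]) :
    Matrix (Fin (β.natDegree + α.natDegree)) (Fin (β.natDegree + α.natDegree)) R :=
  fun i j =>
    if (j : ℕ) < β.natDegree then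
      (if (j : ℕ) ≤ (i : ℕ) then α.coeff ((i : ℕ) - (j : ℕ)) else 0)
    else
      (if (j : ℕ) - β.natDegree ≤ (i : ℕ) then
        β.coeff ((i : ℕ) - ((j : ℕ) - β.natDegree)) else 0)

/-- The resultant of two polynomials, as the determinant of their Sylvester matrix. -/
noncomputable def resultant {R : Type*} [CommRing R] (α β : R[X]) : R :=
  (sylvesterMatrix α β).det

/-!
In characteristic 2 the `Y`-partial `2Y + h(X)` of the curve equation is just `h(X)`, so a
singular point `(x, y)` lies over a root of `h`, equivalently of its radical `H`. Since `H ∣ f`,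
also `f(x) = 0`, so the equation forces `y² = 0`; the remaining condition `f'(x) = h'(x) y = 0`
reads `Q(x) H'(x) = 0`. Thus singular points are the common roots of `H` and `Q H'`, and the
determinant of `sylvesterMatrix α β` is Mathlib's `Polynomial.resultant β α`, which over a field
vanishes exactly when `α` and `β`, not both zero, have a common root.
-/

open UniqueFactorizationMonoid in
theorem map_radical_eq_zero_iff {M A F : Type*} [CommMonoidWithZero M] [NormalizationMonoid M]
    [UniqueFactorizationMonoid M] [MonoidWithZero A] [IsReduced A] [FunLike F M A]
    [MonoidWithZeroHomClass F M A] (φ : F) {a : M} (ha : a ≠ 0) :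
    φ (radical a) = 0 ↔ φ a = 0 := by
  constructor
  · intro hrad
    obtain ⟨c, hc⟩ := radical_dvd_self (a := a)
    rw [hc, map_mul, hrad, zero_mul]
  · intro ha0
    obtain ⟨n, c, hc⟩ := exists_dvd_radical_self_pow ha
    refine IsReduced.eq_zero _ ⟨n, ?_⟩
    rw [← map_pow, hc, map_mul, ha0, zero_mul]

theorem sylvesterMatrix_eq_sylvester {R : Type*} [CommRing R] (α β : R[X]) :
    sylvesterMatrix α β = sylvester β α β.natDegree α.natDegree := by
  ext i j
  induction j using Fin.addCases <;>
  · simp only [sylvesterMatrix, sylvester, Matrix.of_apply, Fin.addCases_left, Fin.addCases_right,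
      Fin.val_castAdd, Fin.val_natAdd, Nat.add_sub_cancel_left, Set.mem_Icc]
    split_ifs <;> first
      | rfl
      | omega
      | exact coeff_eq_zero_of_natDegree_lt (by omega)

theorem resultant_eq_resultant_swap {R : Type*} [CommRing R] (α β : R[X]) :
    _root_.resultant α β = Polynomial.resultant β α := by
  rw [_root_.resultant, sylvesterMatrix_eq_sylvester, Polynomial.resultant]

theorem resultant_eq_zero_iff_exists_common_root {k : Type*} (K : Type*) [Field k] [Field K]
    [IsAlgClosed K] [Algebra k K] {α β : k[X]} (hα : α ≠ 0) :
    _root_.resultant α β = 0 ↔ ∃ x : K, aeval x α = 0 ∧ aeval x β = 0 := by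
  rw [resultant_eq_resultant_swap, Polynomial.resultant_eq_zero_iff, isCoprime_comm,
    isCoprime_iff_aeval_ne_zero_of_isAlgClosed k K]
  simp [hα]

theorem exists_singular_point_iff_of_charP_two {k K : Type*} [CommRing k] [CommRing K] [IsReduced K]
    [CharP K 2] [Algebra k K] {h f : k[X]} (hhf : ∀ x : K, aeval x h = 0 → aeval x f = 0) :
    (∃ x y : K, y ^ 2 + aeval x h * y = aeval x f ∧ 2 * y + aeval x h = 0 ∧
        aeval x (derivative h) * y - aeval x (derivative f) = 0) ↔
      ∃ x : K, aeval x h = 0 ∧ aeval x (derivative f) = 0 := by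
  have two : (2 : K) = 0 := by exact_mod_cast CharP.cast_eq_zero K 2
  constructor
  · rintro ⟨x, y, hcurve, hdy, hdx⟩
    have hx : aeval x h = 0 := by simpa [two] using hdy
    have hy : y = 0 := IsReduced.eq_zero y ⟨2, by simpa [hx, hhf x hx] using hcurve⟩
    exact ⟨x, hx, by simpa [hy] using hdx⟩
  · rintro ⟨x, hx, hdf⟩
    exact ⟨x, 0, by simp [hx, hhf x hx], by simp [hx], by simp [hdf]⟩

theorem char_two_curve_smooth_iff_resultant_ne_zero_general {k : Type*} [Field k] [NormalizationMonoid k] [CharP k 2]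
    (f h Q : k[X]) (hh : h ≠ 0)
    (hf : f = UniqueFactorizationMonoid.radical h * Q) :
    (¬ ∃ x y : AlgebraicClosure k,
        y ^ 2 + aeval x h * y = aeval x f ∧
        2 * y + aeval x h = 0 ∧
        aeval x (derivative h) * y - aeval x (derivative f) = 0) ↔
      _root_.resultant (UniqueFactorizationMonoid.radical h)
        (Q * derivative (UniqueFactorizationMonoid.radical h)) ≠ 0 := by
  set H := UniqueFactorizationMonoid.radical h
  have root_iff (x : AlgebraicClosure k) : aeval x H = 0 ↔ aeval x h = 0 :=
    map_radical_eq_zero_iff (aeval x) hh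
  have derivative_f_eq (x : AlgebraicClosure k) (hx : aeval x H = 0) :
      aeval x (derivative f) = aeval x (Q * derivative H) := by
    simp [hf, derivative_mul, hx, mul_comm]
  rw [not_iff_not,
    exists_singular_point_iff_of_charP_two fun x hx => by simp [hf, (root_iff x).2 hx],
    resultant_eq_zero_iff_exists_common_root (AlgebraicClosure k)
      UniqueFactorizationMonoid.radical_ne_zero]
  refine exists_congr fun x => ?_
  rw [← root_iff]
  exact and_congr_right fun hx => by rw [derivative_f_eq x hx]

/-- Let `k` have characteristic 2, `h ≠ 0` with radical `H`, and `f = H·Q` with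
`Q` coprime to `H`.  The affine curve `Y² + h(X)Y = f(X)` is smooth (no singular
point over the algebraic closure) iff `Res_X(H, Q·H') ≠ 0`. -/
theorem char_two_curve_smooth_iff_resultant_ne_zero {k : Type*} [Field k] [NormalizationMonoid k] [CharP k 2]
    (f h Q : k[X]) (hh : h ≠ 0)
    (hf : f = UniqueFactorizationMonoid.radical h * Q)
    (hcop : IsCoprime (UniqueFactorizationMonoid.radical h) Q) :
    (¬ ∃ x y : AlgebraicClosure k,
        y ^ 2 + aeval x h * y = aeval x f ∧
        2 * y + aeval x h = 0 ∧
        aeval x (derivative h) * y - aeval x (derivative f) = 0) ↔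
      _root_.resultant (UniqueFactorizationMonoid.radical h)
        (Q * derivative (UniqueFactorizationMonoid.radical h)) ≠ 0 :=
  char_two_curve_smooth_iff_resultant_ne_zero_general f h Q hh hf
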